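/- arXiv:2309.07246 — 3 statements merged into one kernel-verified Lean document; each statement's English description precedes it below -/
import Mathlib

section
/- Let c be a positive integer and I = ℕ × [c]. Every Sym-invariant lattice L in ℤ^(I) has a finite equivariant Graver basis; that is, there exists a finite subset G ⊆ L such that Sym(G) equals the set of ⊑-minimal elements of L \ {0}. -/
open Finsupp

/-- A permutation of `ℕ` that moves only finitely many points:
an element of the infinite symmetric group `Sym`. -/
def IsFinPerm (σ : Equiv.Perm ℕ) : Prop := {i | σ i ≠ i}.Finite

/-- Membership in `Sym(n)`: permutations of `ℕ` fixing every index `≥ n`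
(the indices `0, 1, …, n-1` play the role of `[n] = {1, …, n}`). -/
def InSymN (n : ℕ) (σ : Equiv.Perm ℕ) : Prop := ∀ i, n ≤ i → σ i = i

/-- `u ∈ ℤ_{≥0}^{(I)}`. -/
def FsNonneg {I : Type*} (u : I →₀ ℤ) : Prop := ∀ i, 0 ≤ u i

/-- The partial order `⊑`. -/
def Sqle {I : Type*} (u v : I →₀ ℤ) : Prop := ∀ i, 0 ≤ u i * v i ∧ |u i| ≤ |v i|

/-- The Graver basis of (the underlying set of) a lattice `L`:
the `⊑`-minimal elements of `L \ {0}`. -/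
def GraverBasis {I : Type*} (L : Set (I →₀ ℤ)) : Set (I →₀ ℤ) :=
  {u | u ∈ L ∧ u ≠ 0 ∧ ∀ v ∈ L, v ≠ 0 → Sqle v u → v = u}

/-- The `L`-fiber of `u`. -/
def latFiber {I : Type*} (L : Set (I →₀ ℤ)) (u : I →₀ ℤ) : Set (I →₀ ℤ) :=
  {v | FsNonneg v ∧ u - v ∈ L}

/-- `B` is a Markov basis of `L`: for each nonnegative `u` the graph on the fiber
`F_L(u)` with edges `v ~ w` whenever `v - w ∈ B ∪ (-B)` is connected. -/
def IsMarkovBasis {I : Type*} (L B : Set (I →₀ ℤ)) : Prop :=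
  ∀ u, FsNonneg u → ∀ v ∈ latFiber L u, ∀ w ∈ latFiber L u,
    Relation.ReflTransGen
      (fun x y => x ∈ latFiber L u ∧ y ∈ latFiber L u ∧ (x - y ∈ B ∨ y - x ∈ B)) v w

/-- A term order on `ℤ_{≥0}^{(I)}`: an additive well-order on the nonnegative elements. -/
structure TermOrderZ (I : Type*) where
  lt : (I →₀ ℤ) → (I →₀ ℤ) → Prop
  irrefl : ∀ u, FsNonneg u → ¬ lt u u
  trans : ∀ u v w, FsNonneg u → FsNonneg v → FsNonneg w → lt u v → lt v w → lt u w
  total : ∀ u v, FsNonneg u → FsNonneg v → u ≠ v → lt u v ∨ lt v u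
  min_exists : ∀ S : Set (I →₀ ℤ), (∀ u ∈ S, FsNonneg u) → S.Nonempty →
    ∃ m ∈ S, ∀ u ∈ S, u ≠ m → ¬ lt u m
  add_right : ∀ u v w, FsNonneg u → FsNonneg v → FsNonneg w → lt u v → lt (u + w) (v + w)

/-- There is a directed path (w.r.t. `lt`, with moves from `B ∪ (-B)`) inside the fiber
of `u` from `u` to the `lt`-minimal element of the fiber. -/
def GroebnerPath {I : Type*} (L : Set (I →₀ ℤ)) (lt : (I →₀ ℤ) → (I →₀ ℤ) → Prop)
    (B : Set (I →₀ ℤ)) (u : I →₀ ℤ) : Prop :=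
  ∃ (s : ℕ) (v : ℕ → (I →₀ ℤ)), v 0 = u ∧ (∀ t ≤ s, v t ∈ latFiber L u) ∧
    (∀ t < s, lt (v (t + 1)) (v t) ∧ (v t - v (t + 1) ∈ B ∨ v (t + 1) - v t ∈ B)) ∧
    (∀ w ∈ latFiber L u, w ≠ v s → lt (v s) w)

/-- `B` is a Gröbner basis of `L` with respect to the term order `lt`. -/
def IsGroebnerBasis {I : Type*} (L : Set (I →₀ ℤ))
    (lt : (I →₀ ℤ) → (I →₀ ℤ) → Prop) (B : Set (I →₀ ℤ)) : Prop :=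
  ∀ u, FsNonneg u → GroebnerPath L lt B u

/-- `H` is a Hilbert basis of the (set underlying a) monoid `M`:
a generating set of `M` contained in every generating set of `M`. -/
def IsHilbertBasis {N : Type*} [AddCommMonoid N] (M H : Set N) : Prop :=
  H ⊆ M ∧ (AddSubmonoid.closure H : Set N) = M ∧
    ∀ A ⊆ M, (AddSubmonoid.closure A : Set N) = M → H ⊆ A

/-- `u` is an irreducible element of `M`. -/
def IsIrredElem {N : Type*} [AddCommMonoid N] (M : Set N) (u : N) : Prop :=
  u ∈ M ∧ u ≠ 0 ∧ ∀ v ∈ M, ∀ w ∈ M, u = v + w → v = 0 ∨ w = 0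

/-- The action of a permutation of `ℕ` on `ℤ^{(ℕ^d × [c])}`:
`(σ·u)((σ i₁, …, σ i_d), j) = u((i₁, …, i_d), j)`. -/
noncomputable def permActd (d c : ℕ) (σ : Equiv.Perm ℕ) (u : (Fin d → ℕ) × Fin c →₀ ℤ) :
    (Fin d → ℕ) × Fin c →₀ ℤ :=
  Finsupp.equivMapDomain
    (Equiv.prodCongr ((Equiv.refl (Fin d)).arrowCongr σ) (Equiv.refl (Fin c))) u

/-- The action of a permutation of `ℕ` on `ℤ^{(ℕ × [c])}`: `(σ·u)(σ i, j) = u(i, j)`. -/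
noncomputable def permAct1 (c : ℕ) (σ : Equiv.Perm ℕ) (u : ℕ × Fin c →₀ ℤ) :
    ℕ × Fin c →₀ ℤ :=
  Finsupp.equivMapDomain (Equiv.prodCongr σ (Equiv.refl (Fin c))) u

/-- The action of a permutation of `ℕ` on `ℤ^{(ℕ)}`: `(σ·u)(σ i) = u i`. -/
noncomputable def permAct0 (σ : Equiv.Perm ℕ) (u : ℕ →₀ ℤ) : ℕ →₀ ℤ :=
  Finsupp.equivMapDomain σ u

/-- `Sym(B)` for `B ⊆ ℤ^{(ℕ^d × [c])}`. -/
def symOrbitd (d c : ℕ) (B : Set ((Fin d → ℕ) × Fin c →₀ ℤ)) :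
    Set ((Fin d → ℕ) × Fin c →₀ ℤ) :=
  {w | ∃ σ, IsFinPerm σ ∧ ∃ b ∈ B, w = permActd d c σ b}

/-- `Sym(n)(B)` for `B ⊆ ℤ^{(ℕ^d × [c])}`. -/
def symOrbitNd (d c n : ℕ) (B : Set ((Fin d → ℕ) × Fin c →₀ ℤ)) :
    Set ((Fin d → ℕ) × Fin c →₀ ℤ) :=
  {w | ∃ σ, InSymN n σ ∧ ∃ b ∈ B, w = permActd d c σ b}

/-- `Sym(B)` for `B ⊆ ℤ^{(ℕ × [c])}`. -/
def symOrbit1 (c : ℕ) (B : Set (ℕ × Fin c →₀ ℤ)) : Set (ℕ × Fin c →₀ ℤ) :=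
  {w | ∃ σ, IsFinPerm σ ∧ ∃ b ∈ B, w = permAct1 c σ b}

/-- `Sym(B)` for `B ⊆ ℤ^{(ℕ)}`. -/
def symOrbit0 (B : Set (ℕ →₀ ℤ)) : Set (ℕ →₀ ℤ) :=
  {w | ∃ σ, IsFinPerm σ ∧ ∃ b ∈ B, w = permAct0 σ b}

/-- `supp(u) ⊆ I_n = [n]^d × [c]`. -/
def SuppIn (d c n : ℕ) (u : (Fin d → ℕ) × Fin c →₀ ℤ) : Prop :=
  ∀ p : (Fin d → ℕ) × Fin c, u p ≠ 0 → ∀ k, p.1 k < n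

/-- `ℤ^{(I_n)}`, for `I_n = [n]^d × [c]`, as a subgroup of `ℤ^{(ℕ^d × [c])}`. -/
noncomputable def suppSubgroup (d c n : ℕ) : AddSubgroup ((Fin d → ℕ) × Fin c →₀ ℤ) where
  carrier := {u | SuppIn d c n u}
  zero_mem' := by intro p hp; simp at hp
  add_mem' := by
    intro a b ha hb p hp k
    by_cases h : a p = 0
    · refine hb p ?_ k
      intro hbp
      exact hp (by simp [h, hbp])
    · exact ha p h k
  neg_mem' := by
    intro a ha p hp k
    refine ha p ?_ k
    intro hap
    exact hp (by simp [hap])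

/-- The positive part `u⁺`. -/
noncomputable def fsPos {I : Type*} (u : I →₀ ℤ) : I →₀ ℤ :=
  u.mapRange (fun z => max z 0) (by simp)

/-- The negative part `u⁻`. -/
noncomputable def fsNeg {I : Type*} (u : I →₀ ℤ) : I →₀ ℤ :=
  u.mapRange (fun z => max (-z) 0) (by simp)

namespace GraverAux

open List

/-! ### The coordinatewise sign-compatible order on `ℤ` -/

/-- The basic order `⊑` on `ℤ`. -/
def rZ (a b : ℤ) : Prop := 0 ≤ a * b ∧ |a| ≤ |b|

lemma rZ_iff {a b : ℤ} : rZ a b ↔ (a.toNat ≤ b.toNat ∧ (-a).toNat ≤ (-b).toNat) := by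
  unfold rZ
  rcases le_or_gt 0 a with ha | ha <;> rcases le_or_gt 0 b with hb | hb
  · rw [abs_of_nonneg ha, abs_of_nonneg hb]
    constructor
    · rintro ⟨-, h⟩; omega
    · rintro ⟨h, -⟩; exact ⟨mul_nonneg ha hb, by omega⟩
  · rw [abs_of_nonneg ha, abs_of_neg hb]
    constructor
    · rintro ⟨h1, h2⟩
      have ha0 : a = 0 := by
        by_contra h
        have hpos : 0 < a := lt_of_le_of_ne ha (Ne.symm h)
        exact absurd h1 (not_le.2 (mul_neg_of_pos_of_neg hpos hb))
      omega
    · rintro ⟨h1, h2⟩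
      have ha0 : a = 0 := by omega
      subst ha0
      exact ⟨by simp, by omega⟩
  · rw [abs_of_neg ha, abs_of_nonneg hb]
    constructor
    · rintro ⟨h1, h2⟩
      have hb0 : b = 0 := by
        by_contra h
        have hpos : 0 < b := lt_of_le_of_ne hb (Ne.symm h)
        exact absurd h1 (not_le.2 (by nlinarith))
      omega
    · rintro ⟨h1, h2⟩; omega
  · rw [abs_of_neg ha, abs_of_neg hb]
    constructor
    · rintro ⟨-, h⟩; omega
    · rintro ⟨-, h⟩
      exact ⟨le_of_lt (mul_pos_of_neg_of_neg ha hb), by omega⟩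

lemma rZ_refl (a : ℤ) : rZ a a := ⟨mul_self_nonneg a, le_rfl⟩

lemma rZ_trans {a b c : ℤ} (h1 : rZ a b) (h2 : rZ b c) : rZ a c := by
  rw [rZ_iff] at *
  omega

lemma rZ_zero (b : ℤ) : rZ 0 b := ⟨by simp, by simp⟩

/-! ### The row relation and its pwo property -/

variable {c : ℕ}

/-- The relation on indexed rows comparing only the row vectors, coordinatewise by `rZ`. -/
def rr (c : ℕ) (x y : ℕ × (Fin c → ℤ)) : Prop := ∀ j, rZ (x.2 j) (y.2 j)

instance : IsRefl (ℕ × (Fin c → ℤ)) (rr c) := ⟨fun x j => rZ_refl _⟩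

instance : IsTrans (ℕ × (Fin c → ℤ)) (rr c) :=
  ⟨fun _ _ _ h1 h2 j => rZ_trans (h1 j) (h2 j)⟩

lemma pwo_rr (c : ℕ) : (Set.univ : Set (ℕ × (Fin c → ℤ))).PartiallyWellOrderedOn (rr c) := by
  rw [Set.partiallyWellOrderedOn_iff_exists_lt]
  intro f _
  set g : ℕ → (Fin c × Bool → ℕ) := fun n p =>
    if p.2 then ((f n).2 p.1).toNat else (-((f n).2 p.1)).toNat with hg
  have hPWO : (Set.univ : Set (Fin c × Bool → ℕ)).IsPWO :=
    Set.isPWO_of_wellQuasiOrderedLE _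
  obtain ⟨m, n, hmn, hle⟩ := Set.partiallyWellOrderedOn_iff_exists_lt.1 hPWO g (fun n => Set.mem_univ _)
  refine ⟨m, n, hmn, fun j => ?_⟩
  rw [rZ_iff]
  exact ⟨by simpa [hg] using hle (j, true), by simpa [hg] using hle (j, false)⟩

end GraverAux
namespace GraverAux

variable {c : ℕ}

/-! ### The permutation action -/

lemma permAct1_apply (σ : Equiv.Perm ℕ) (u : ℕ × Fin c →₀ ℤ) (p : ℕ × Fin c) :
    permAct1 c σ u p = u (σ⁻¹ p.1, p.2) := by
  obtain ⟨i, j⟩ := p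
  rfl

lemma permAct1_permAct1 (σ τ : Equiv.Perm ℕ) (u : ℕ × Fin c →₀ ℤ) :
    permAct1 c σ (permAct1 c τ u) = permAct1 c (σ * τ) u := by
  ext p
  simp only [permAct1_apply, mul_inv_rev, Equiv.Perm.mul_apply]

lemma permAct1_one (u : ℕ × Fin c →₀ ℤ) : permAct1 c 1 u = u := by
  ext p
  simp [permAct1_apply]

lemma permAct1_zero (σ : Equiv.Perm ℕ) : permAct1 c σ (0 : ℕ × Fin c →₀ ℤ) = 0 := by
  ext p
  simp [permAct1_apply]

lemma permAct1_inv_cancel (σ : Equiv.Perm ℕ) (u : ℕ × Fin c →₀ ℤ) :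
    permAct1 c σ (permAct1 c σ⁻¹ u) = u := by
  rw [permAct1_permAct1, mul_inv_cancel, permAct1_one]

lemma permAct1_inv_cancel' (σ : Equiv.Perm ℕ) (u : ℕ × Fin c →₀ ℤ) :
    permAct1 c σ⁻¹ (permAct1 c σ u) = u := by
  rw [permAct1_permAct1, inv_mul_cancel, permAct1_one]

lemma permAct1_eq_zero_iff (σ : Equiv.Perm ℕ) (u : ℕ × Fin c →₀ ℤ) :
    permAct1 c σ u = 0 ↔ u = 0 := by
  constructor
  · intro h
    have := congrArg (permAct1 c σ⁻¹) h
    rwa [permAct1_inv_cancel', permAct1_zero] at this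
  · rintro rfl; exact permAct1_zero σ

/-! ### `IsFinPerm` lemmas -/

lemma isFinPerm_one : IsFinPerm 1 := by
  simp [IsFinPerm]

lemma isFinPerm_mul {σ τ : Equiv.Perm ℕ} (hσ : IsFinPerm σ) (hτ : IsFinPerm τ) :
    IsFinPerm (σ * τ) := by
  refine (hσ.union hτ).subset fun i hi => ?_
  by_cases h : τ i = i
  · exact Or.inl (by simpa [Equiv.Perm.mul_apply, h] using hi)
  · exact Or.inr h

lemma isFinPerm_inv {σ : Equiv.Perm ℕ} (hσ : IsFinPerm σ) : IsFinPerm σ⁻¹ := by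
  refine (hσ.image σ).subset fun i hi => ?_
  simp only [IsFinPerm, Set.mem_setOf_eq] at hi
  have hmem : σ⁻¹ i ∈ {j | σ j ≠ j} := by
    simp only [Set.mem_setOf_eq, Equiv.Perm.inv_def, Equiv.apply_symm_apply]
    intro h; exact hi h.symm
  exact ⟨σ⁻¹ i, hmem, Equiv.apply_symm_apply σ i⟩

lemma isFinPerm_swap (a b : ℕ) : IsFinPerm (Equiv.swap a b) := by
  refine ((Set.finite_singleton b).insert a).subset fun i hi => ?_
  by_contra h
  simp only [Set.mem_insert_iff, Set.mem_singleton_iff, not_or] at h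
  exact hi (Equiv.swap_apply_of_ne_of_ne h.1 h.2)

/-- Any injection on a finite set of naturals extends to a finitary permutation. -/
lemma exists_finPerm_extend (A : Finset ℕ) (f : ℕ → ℕ) (hf : Set.InjOn f A) :
    ∃ σ : Equiv.Perm ℕ, IsFinPerm σ ∧ ∀ a ∈ A, σ a = f a := by
  classical
  induction A using Finset.induction with
  | empty => exact ⟨1, isFinPerm_one, by simp⟩
  | @insert a A ha ih =>
    obtain ⟨σ, hσ, hext⟩ := ih (hf.mono (by simp only [Finset.coe_insert]; exact Set.subset_insert _ _))
    refine ⟨σ * Equiv.swap a (σ⁻¹ (f a)), isFinPerm_mul hσ (isFinPerm_swap _ _), ?_⟩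
    intro x hx
    rcases Finset.mem_insert.1 hx with h | hxA
    · subst h
      simp [Equiv.Perm.mul_apply, Equiv.swap_apply_left]
    · have hxa : x ≠ a := fun h => ha (h ▸ hxA)
      have hxb : x ≠ σ⁻¹ (f a) := by
        intro heq
        have h1 : f x = f a := by
          rw [← hext x hxA, heq]
          exact Equiv.apply_symm_apply σ (f a)
        exact hxa (hf (by simp [hxA]) (by simp) h1)
      rw [Equiv.Perm.mul_apply, Equiv.swap_apply_of_ne_of_ne hxa hxb, hext x hxA]

end GraverAux
namespace GraverAux

open List

variable {c : ℕ}

/-! ### Row encodings -/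

/-- The set of indices of nonzero rows. -/
noncomputable def rowSupp (u : ℕ × Fin c →₀ ℤ) : Finset ℕ := u.support.image Prod.fst

/-- The sorted list of indices of nonzero rows. -/
noncomputable def rlist (u : ℕ × Fin c →₀ ℤ) : List ℕ := (rowSupp u).sort (· ≤ ·)

/-- The list of (index, row) pairs of `u`. -/
noncomputable def prs (u : ℕ × Fin c →₀ ℤ) : List (ℕ × (Fin c → ℤ)) :=
  (rlist u).map (fun i => (i, fun j => u (i, j)))

lemma mem_rowSupp {u : ℕ × Fin c →₀ ℤ} {i : ℕ} :
    i ∈ rowSupp u ↔ ∃ j, u (i, j) ≠ 0 := by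
  simp only [rowSupp, Finset.mem_image, Finsupp.mem_support_iff]
  constructor
  · rintro ⟨⟨i', j⟩, hp, rfl⟩
    exact ⟨j, hp⟩
  · rintro ⟨j, hj⟩
    exact ⟨(i, j), hj, rfl⟩

lemma mem_prs {v : ℕ × Fin c →₀ ℤ} {x : ℕ × (Fin c → ℤ)} (hx : x ∈ prs v) :
    x.2 = fun j => v (x.1, j) := by
  simp only [prs, List.mem_map] at hx
  obtain ⟨i, _, rfl⟩ := hx
  rfl

/-- The key combinatorial step: a Higman embedding of row lists yields a
finitary permutation `σ` with `σ · u ⊑ v`. -/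
lemma sqle_of_sublistForall₂ {u v : ℕ × Fin c →₀ ℤ}
    (h : List.SublistForall₂ (rr c) (prs u) (prs v)) :
    ∃ σ, IsFinPerm σ ∧ Sqle (permAct1 c σ u) v := by
  classical
  rw [List.sublistForall₂_iff] at h
  obtain ⟨l, hall, hsub⟩ := h
  have hlenu : (prs u).length = (rlist u).length := List.length_map _
  have hlen : (rlist u).length = l.length := by
    rw [← hlenu]; exact hall.length_eq
  have hmapsub : l.map Prod.fst <+ rlist v := by
    have := hsub.map Prod.fst
    simpa [prs, List.map_map, Function.comp_def, List.map_id'] using this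
  have hnodup : (l.map Prod.fst).Nodup := hmapsub.nodup (Finset.sort_nodup _ _)
  -- the partial injection
  set f : ℕ → ℕ := fun i => (l.map Prod.fst).getD ((rlist u).idxOf i) i with hfdef
  have hflt : ∀ i ∈ rlist u, (rlist u).idxOf i < (l.map Prod.fst).length := by
    intro i hi
    rw [List.length_map, ← hlen]
    exact List.idxOf_lt_length_iff.2 hi
  have hfval : ∀ i (hi : i ∈ rlist u),
      f i = (l.map Prod.fst)[(rlist u).idxOf i]'(hflt i hi) := by
    intro i hi
    exact List.getD_eq_getElem _ _ (hflt i hi)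
  have hinj : Set.InjOn f (rowSupp u) := by
    intro i hi i' hi' hf
    have hi1 : i ∈ rlist u := (Finset.mem_sort _).2 hi
    have hi2 : i' ∈ rlist u := (Finset.mem_sort _).2 hi'
    rw [hfval i hi1, hfval i' hi2] at hf
    have hidx := (List.Nodup.getElem_inj_iff hnodup).1 hf
    have h1 := List.idxOf_get (l := rlist u) (a := i) (List.idxOf_lt_length_iff.2 hi1)
    have h2 := List.idxOf_get (l := rlist u) (a := i') (List.idxOf_lt_length_iff.2 hi2)
    rw [← h1, ← h2]
    simp only [List.get_eq_getElem]
    congr 1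
  obtain ⟨σ, hσ, hext⟩ := exists_finPerm_extend (rowSupp u) f hinj
  refine ⟨σ, hσ, ?_⟩
  rintro ⟨i, j⟩
  have hval : permAct1 c σ u (i, j) = u (σ⁻¹ i, j) := permAct1_apply σ u (i, j)
  rw [hval]
  set i₀ := σ⁻¹ i with hi₀
  by_cases h0 : i₀ ∈ rowSupp u
  · have hi0l : i₀ ∈ rlist u := (Finset.mem_sort _).2 h0
    have hieq : i = f i₀ := by
      rw [← hext i₀ h0, hi₀, Equiv.Perm.inv_def, Equiv.apply_symm_apply]
    set k := (rlist u).idxOf i₀ with hk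
    have hk1 : k < (rlist u).length := List.idxOf_lt_length_iff.2 hi0l
    have hk2 : k < l.length := by rw [← hlen]; exact hk1
    have hk3 : k < (prs u).length := by rw [hlenu]; exact hk1
    have hrr := hall.get (i := k) hk3 hk2
    have hprs : (prs u).get ⟨k, hk3⟩ = (i₀, fun j => u (i₀, j)) := by
      simp only [prs, List.get_eq_getElem, List.getElem_map]
      congr 1
      · exact List.idxOf_get hk1
      · funext j'
        congr 1
        rw [show (rlist u)[k] = (rlist u).get ⟨k, hk1⟩ from rfl, List.idxOf_get hk1]
    have hlfst : (l.get ⟨k, hk2⟩).1 = i := by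
      rw [hieq, hfval i₀ hi0l]
      simp only [List.getElem_map, ← hk]
      rfl
    have hlmem : l.get ⟨k, hk2⟩ ∈ prs v := hsub.subset (List.get_mem l ⟨k, hk2⟩)
    have hlsnd : (l.get ⟨k, hk2⟩).2 = fun j => v (i, j) := by
      rw [mem_prs hlmem, hlfst]
    rw [hprs] at hrr
    have := hrr j
    rw [hlsnd] at this
    exact this
  · have hz : u (i₀, j) = 0 := by
      by_contra hne
      exact h0 (mem_rowSupp.2 ⟨j, hne⟩)
    rw [hz]
    exact rZ_zero _

/-- The relation `∃ σ ∈ Sym, σ·u ⊑ v` is a partial well-order. -/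
lemma pwo_sqle (c : ℕ) : (Set.univ : Set (ℕ × Fin c →₀ ℤ)).PartiallyWellOrderedOn
    (fun u v => ∃ σ, IsFinPerm σ ∧ Sqle (permAct1 c σ u) v) := by
  rw [Set.partiallyWellOrderedOn_iff_exists_lt]
  intro g _
  haveI : IsPreorder (ℕ × (Fin c → ℤ)) (rr c) := {}
  have H := (pwo_rr c).partiallyWellOrderedOn_sublistForall₂ (r := rr c)
  obtain ⟨m, n, hmn, hrel⟩ := Set.partiallyWellOrderedOn_iff_exists_lt.1 H (fun n => prs (g n)) (fun n x _ => Set.mem_univ x)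
  exact ⟨m, n, hmn, sqle_of_sublistForall₂ hrel⟩

end GraverAux
namespace GraverAux

variable {c : ℕ}

/-- Equivariance of `Sqle` under the action. -/
lemma sqle_perm {σ : Equiv.Perm ℕ} {v u : ℕ × Fin c →₀ ℤ}
    (h : Sqle v (permAct1 c σ u)) : Sqle (permAct1 c σ⁻¹ v) u := by
  rintro ⟨i, j⟩
  have h1 : permAct1 c σ⁻¹ v (i, j) = v (σ i, j) := by
    rw [permAct1_apply]; simp
  have h2 : u (i, j) = permAct1 c σ u (σ i, j) := by
    rw [permAct1_apply]; simp
  rw [h1, h2]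
  exact h (σ i, j)

/-- The Graver basis is `Sym`-equivariant. -/
lemma graver_perm (L : AddSubgroup (ℕ × Fin c →₀ ℤ))
    (hL : ∀ σ, IsFinPerm σ → ∀ u ∈ L, permAct1 c σ u ∈ L)
    {σ : Equiv.Perm ℕ} (hσ : IsFinPerm σ) {u : ℕ × Fin c →₀ ℤ}
    (hu : u ∈ GraverBasis (L : Set (ℕ × Fin c →₀ ℤ))) :
    permAct1 c σ u ∈ GraverBasis (L : Set (ℕ × Fin c →₀ ℤ)) := by
  obtain ⟨huL, hu0, humin⟩ := hu
  refine ⟨hL σ hσ u huL, by simpa [permAct1_eq_zero_iff] using hu0, ?_⟩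
  intro v hvL hv0 hsq
  have hv'L : permAct1 c σ⁻¹ v ∈ L := hL σ⁻¹ (isFinPerm_inv hσ) v hvL
  have hv'0 : permAct1 c σ⁻¹ v ≠ 0 := by simpa [permAct1_eq_zero_iff] using hv0
  have := humin _ hv'L hv'0 (sqle_perm hsq)
  calc v = permAct1 c σ (permAct1 c σ⁻¹ v) := (permAct1_inv_cancel σ v).symm
  _ = permAct1 c σ u := by rw [this]

/-- The orbit equivalence relation. -/
def ES (c : ℕ) : Setoid (ℕ × Fin c →₀ ℤ) where
  r u v := ∃ σ, IsFinPerm σ ∧ permAct1 c σ u = v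
  iseqv := by
    constructor
    · exact fun u => ⟨1, isFinPerm_one, permAct1_one u⟩
    · rintro u v ⟨σ, hσ, rfl⟩
      exact ⟨σ⁻¹, isFinPerm_inv hσ, permAct1_inv_cancel' σ u⟩
    · rintro u v w ⟨σ, hσ, rfl⟩ ⟨τ, hτ, rfl⟩
      exact ⟨τ * σ, isFinPerm_mul hτ hσ, (permAct1_permAct1 τ σ u).symm⟩

end GraverAux

/-- For `I = ℕ × [c]`, every `Sym`-invariant lattice `L ⊆ ℤ^{(I)}`
has a finite equivariant Graver basis. -/
theorem finite_equivariant_graver_basis (c : ℕ) (hc : 0 < c)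
    (L : AddSubgroup (ℕ × Fin c →₀ ℤ))
    (hL : ∀ σ, IsFinPerm σ → ∀ u ∈ L, permAct1 c σ u ∈ L) :
    ∃ G : Finset (ℕ × Fin c →₀ ℤ), ↑G ⊆ (L : Set (ℕ × Fin c →₀ ℤ)) ∧
      symOrbit1 c ↑G = GraverBasis (L : Set (ℕ × Fin c →₀ ℤ)) := by
  classical
  open GraverAux in
  letI S : Setoid (ℕ × Fin c →₀ ℤ) := GraverAux.ES c
  set 𝒢 := GraverBasis (L : Set (ℕ × Fin c →₀ ℤ)) with h𝒢
  -- R on Graver elements forces equivalence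
  have horb : ∀ u ∈ 𝒢, ∀ v ∈ 𝒢,
      (∃ σ, IsFinPerm σ ∧ Sqle (permAct1 c σ u) v) → S.r u v := by
    rintro u hu v hv ⟨σ, hσ, hsq⟩
    refine ⟨σ, hσ, ?_⟩
    have hwL : permAct1 c σ u ∈ L := hL σ hσ u hu.1
    have hw0 : permAct1 c σ u ≠ 0 := by
      simpa [GraverAux.permAct1_eq_zero_iff] using hu.2.1
    exact hv.2.2 _ hwL hw0 hsq
  -- finitely many orbits in the Graver basis
  have hfin : (Set.image (Quotient.mk S) 𝒢).Finite := by
    by_contra hinf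
    have hinf2 : (Set.image (Quotient.mk S) 𝒢).Infinite := hinf
    let femb := hinf2.natEmbedding
    have hex : ∀ n : ℕ, ∃ u, u ∈ 𝒢 ∧ Quotient.mk S u = (femb n : Quotient S) := by
      intro n
      obtain ⟨u, hu1, hu2⟩ := (femb n).2
      exact ⟨u, hu1, hu2⟩
    choose g hg1 hg2 using hex
    obtain ⟨m, n, hmn, hrel⟩ := Set.partiallyWellOrderedOn_iff_exists_lt.1 (GraverAux.pwo_sqle c) g (fun n => Set.mem_univ _)
    have : Quotient.mk S (g m) = Quotient.mk S (g n) :=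
      Quotient.sound (horb _ (hg1 m) _ (hg1 n) hrel)
    rw [hg2, hg2] at this
    exact (Nat.ne_of_lt hmn) (femb.injective (Subtype.ext this))
  -- representatives
  have houtmem : ∀ q ∈ Set.image (Quotient.mk S) 𝒢, Quotient.out q ∈ 𝒢 := by
    rintro q ⟨u, hu, rfl⟩
    have hq : Quotient.mk S (Quotient.out (Quotient.mk S u)) = Quotient.mk S u :=
      Quotient.out_eq _
    obtain ⟨σ, hσ, hperm⟩ := Quotient.exact hq
    have h2 := congrArg (permAct1 c σ⁻¹) hperm
    rw [GraverAux.permAct1_inv_cancel'] at h2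
    rw [h2]
    exact GraverAux.graver_perm L hL (GraverAux.isFinPerm_inv hσ) hu
  refine ⟨hfin.toFinset.image Quotient.out, ?_, ?_⟩
  · intro b hb
    simp only [Finset.coe_image, Set.mem_image, Set.Finite.coe_toFinset] at hb
    obtain ⟨q, hq, rfl⟩ := hb
    exact (houtmem q hq).1
  · ext w
    simp only [symOrbit1, Set.mem_setOf_eq, Finset.coe_image, Set.mem_image,
      Set.Finite.coe_toFinset, Finset.mem_coe]
    constructor
    · rintro ⟨σ, hσ, b, hb, rfl⟩
      obtain ⟨q, hq, rfl⟩ := hb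
      exact GraverAux.graver_perm L hL hσ (houtmem q hq)
    · intro hw
      have hq : Quotient.mk S w ∈ Set.image (Quotient.mk S) 𝒢 := ⟨w, hw, rfl⟩
      obtain ⟨σ, hσ, hperm⟩ := Quotient.exact (Quotient.out_eq (Quotient.mk S w))
      exact ⟨σ, hσ, Quotient.out (Quotient.mk S w), ⟨_, hq, rfl⟩, hperm.symm⟩
end

section
/- Let c be a positive integer and I = ℕ × [c]. Every Sym-invariant lattice L in ℤ^(I) has a finite equivariant Markov basis; that is, there exists a finite subset B ⊆ L such that Sym(B) is a Markov basis of L. -/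
open Finsupp

/-! ### Auxiliary development -/

section IntHelpers

lemma abs_le_iff_natAbs_le (x y : ℤ) : |x| ≤ |y| ↔ x.natAbs ≤ y.natAbs := by
  rw [← Int.natCast_natAbs x, ← Int.natCast_natAbs y, Nat.cast_le]

end IntHelpers

section SqleBasics

variable {I : Type*}

lemma sqle_refl (u : I →₀ ℤ) : Sqle u u := fun i => ⟨mul_self_nonneg _, le_refl _⟩

lemma sqle_trans {a b c : I →₀ ℤ} (hab : Sqle a b) (hbc : Sqle b c) : Sqle a c := by
  intro i
  obtain ⟨h1, h2⟩ := hab i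
  obtain ⟨h3, h4⟩ := hbc i
  rw [Int.mul_nonneg_iff] at h1 h3 ⊢
  rw [abs_le_iff_natAbs_le] at h2 h4 ⊢
  omega

/-- The 1-norm of a finitely supported integer vector. -/
noncomputable def nrm (x : I →₀ ℤ) : ℕ := x.support.sum fun p => (x p).natAbs

lemma nrm_lt {a b : I →₀ ℤ} (hle : ∀ p, (a p).natAbs ≤ (b p).natAbs)
    (p0 : I) (hst : (a p0).natAbs < (b p0).natAbs) : nrm a < nrm b := by
  classical
  have hsum : ∀ x : I →₀ ℤ, x.support ⊆ a.support ∪ b.support →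
      nrm x = (a.support ∪ b.support).sum fun p => (x p).natAbs := by
    intro x hx
    exact Finset.sum_subset hx (by
      intro p _ hp
      simp [Finsupp.notMem_support_iff.mp hp])
  rw [hsum a Finset.subset_union_left, hsum b Finset.subset_union_right]
  refine Finset.sum_lt_sum (fun p _ => hle p) ⟨p0, ?_, hst⟩
  have : b p0 ≠ 0 := by
    intro h
    rw [h] at hst
    simp at hst
  exact Finset.mem_union_right _ (Finsupp.mem_support_iff.mpr this)

lemma nrm_lt_of_sqle_ne {v g : I →₀ ℤ} (hvg : Sqle v g) (hne : v ≠ g) : nrm v < nrm g := by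
  obtain ⟨p0, hp0⟩ := Finsupp.ne_iff.mp hne
  have hle : ∀ p, ((v : I →₀ ℤ) p).natAbs ≤ (g p).natAbs := by
    intro p
    exact (abs_le_iff_natAbs_le _ _).mp (hvg p).2
  refine nrm_lt hle p0 ?_
  obtain ⟨h1, h2⟩ := hvg p0
  rw [Int.mul_nonneg_iff] at h1
  rw [abs_le_iff_natAbs_le] at h2
  omega

/-- Existence of a Graver element below a nonzero lattice element. -/
lemma exists_graver_le (L : AddSubgroup (I →₀ ℤ)) (x : I →₀ ℤ) (hx : x ∈ L) (h0 : x ≠ 0) :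
    ∃ g ∈ GraverBasis (L : Set (I →₀ ℤ)), Sqle g x := by
  set S : Set (I →₀ ℤ) := {h | h ∈ L ∧ h ≠ 0 ∧ Sqle h x} with hS
  have hxS : x ∈ S := ⟨hx, h0, sqle_refl x⟩
  have hTne : (nrm '' S).Nonempty := ⟨nrm x, x, hxS, rfl⟩
  obtain ⟨g, hgS, hgn⟩ := Nat.sInf_mem hTne
  have hmin : ∀ h ∈ S, nrm g ≤ nrm h := by
    intro h hh
    rw [hgn]
    exact Nat.sInf_le ⟨h, hh, rfl⟩
  refine ⟨g, ⟨hgS.1, hgS.2.1, ?_⟩, hgS.2.2⟩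
  intro v hvL hv0 hvg
  by_contra hne
  have hvS : v ∈ S := ⟨hvL, hv0, sqle_trans hvg hgS.2.2⟩
  exact absurd (hmin v hvS) (not_le.mpr (nrm_lt_of_sqle_ne hvg hne))

end SqleBasics

section GraverMarkov

variable {I : Type*}

/-- Any superset of the Graver basis is a Markov basis. -/
lemma graver_markov (L : AddSubgroup (I →₀ ℤ)) (M : Set (I →₀ ℤ))
    (hM : GraverBasis (L : Set (I →₀ ℤ)) ⊆ M) : IsMarkovBasis (L : Set (I →₀ ℤ)) M := by
  intro u hu v hv w hw
  suffices H : ∀ n v w, v ∈ latFiber (L : Set (I →₀ ℤ)) u → w ∈ latFiber (L : Set (I →₀ ℤ)) u →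
      nrm (v - w) < n →
      Relation.ReflTransGen (fun x y => x ∈ latFiber (L : Set (I →₀ ℤ)) u ∧
        y ∈ latFiber (L : Set (I →₀ ℤ)) u ∧ (x - y ∈ M ∨ y - x ∈ M)) v w by
    exact H (nrm (v - w) + 1) v w hv hw (Nat.lt_succ_self _)
  intro n
  induction n with
  | zero => intro v w _ _ h; omega
  | succ n ih =>
    intro v w hv hw hlt
    by_cases hvw : v = w
    · subst hvw; exact Relation.ReflTransGen.refl
    · have hvwL : v - w ∈ L := by
        have h : v - w = (u - w) - (u - v) := by abel
        rw [h]
        exact sub_mem hw.2 hv.2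
      obtain ⟨g, hg, hsq⟩ := exists_graver_le L (v - w) hvwL (sub_ne_zero.mpr hvw)
      have hv' : (v - g) ∈ latFiber (L : Set (I →₀ ℤ)) u := by
        constructor
        · intro p
          obtain ⟨h1, h2⟩ := hsq p
          have h3 := hv.1 p
          have h4 := hw.1 p
          rw [Finsupp.sub_apply] at h1 h2 ⊢
          rw [Int.mul_nonneg_iff] at h1
          rw [abs_le_iff_natAbs_le] at h2
          omega
        · have h : u - (v - g) = (u - v) + g := by abel
          rw [h]
          exact add_mem hv.2 hg.1
      have hdec : nrm (v - g - w) < nrm (v - w) := by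
        obtain ⟨p0, hp0⟩ := Finsupp.ne_iff.mp hg.2.1
        have hle : ∀ p, ((v - g - w) p).natAbs ≤ ((v - w) p).natAbs := by
          intro p
          obtain ⟨h1, h2⟩ := hsq p
          simp only [Finsupp.sub_apply] at h1 h2 ⊢
          rw [Int.mul_nonneg_iff] at h1
          rw [abs_le_iff_natAbs_le] at h2
          omega
        refine nrm_lt hle p0 ?_
        obtain ⟨h1, h2⟩ := hsq p0
        simp only [Finsupp.sub_apply, Finsupp.coe_zero, Pi.zero_apply] at h1 h2 hp0 ⊢
        rw [Int.mul_nonneg_iff] at h1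
        rw [abs_le_iff_natAbs_le] at h2
        omega
      refine Relation.ReflTransGen.head ⟨hv, hv', Or.inl ?_⟩ (ih (v - g) w hv' hw (by omega))
      have h : v - (v - g) = g := by abel
      rw [h]
      exact hM hg

end GraverMarkov
section PermInfra

lemma isFinPerm_refl : IsFinPerm (Equiv.refl ℕ) := by
  simp [IsFinPerm]

lemma isFinPerm_trans {σ τ : Equiv.Perm ℕ} (hσ : IsFinPerm σ) (hτ : IsFinPerm τ) :
    IsFinPerm (σ.trans τ) := by
  refine Set.Finite.subset (hσ.union hτ) ?_
  intro i hi
  by_contra h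
  simp only [Set.mem_union, Set.mem_setOf_eq] at h
  push_neg at h
  simp only [Set.mem_setOf_eq, Equiv.trans_apply, h.1, h.2] at hi
  exact hi rfl

lemma isFinPerm_symm {σ : Equiv.Perm ℕ} (hσ : IsFinPerm σ) : IsFinPerm σ.symm := by
  refine Set.Finite.subset (hσ.image σ) ?_
  intro i hi
  simp only [Set.mem_setOf_eq] at hi
  refine ⟨σ.symm i, ?_, by simp⟩
  simp only [Set.mem_setOf_eq]
  intro h
  rw [Equiv.apply_symm_apply] at h
  exact hi h.symm

lemma isFinPerm_swap (a b : ℕ) : IsFinPerm (Equiv.swap a b) := by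
  refine Set.Finite.subset ((Set.finite_singleton b).insert a) ?_
  intro i hi
  simp only [Set.mem_setOf_eq] at hi
  by_contra h
  simp only [Set.mem_insert_iff, Set.mem_singleton_iff] at h
  push_neg at h
  exact hi (Equiv.swap_apply_of_ne_of_ne h.1 h.2)

variable {c : ℕ}

lemma permAct1_apply (σ : Equiv.Perm ℕ) (u : ℕ × Fin c →₀ ℤ) (i : ℕ) (j : Fin c) :
    permAct1 c σ u (i, j) = u (σ.symm i, j) := rfl

lemma permAct1_refl (u : ℕ × Fin c →₀ ℤ) : permAct1 c (Equiv.refl ℕ) u = u := by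
  ext p
  rfl

lemma permAct1_trans (σ τ : Equiv.Perm ℕ) (u : ℕ × Fin c →₀ ℤ) :
    permAct1 c τ (permAct1 c σ u) = permAct1 c (σ.trans τ) u := by
  ext p
  rfl

lemma permAct1_symm_cancel (σ : Equiv.Perm ℕ) (u : ℕ × Fin c →₀ ℤ) :
    permAct1 c σ.symm (permAct1 c σ u) = u := by
  ext ⟨i, j⟩
  rw [permAct1_apply, permAct1_apply, Equiv.symm_symm, Equiv.symm_apply_apply]

lemma permAct1_eq_zero {σ : Equiv.Perm ℕ} {u : ℕ × Fin c →₀ ℤ}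
    (h : permAct1 c σ u = 0) : u = 0 := by
  ext ⟨i, j⟩
  have := congrArg (fun x => Finsupp.equivMapDomain
    (Equiv.prodCongr σ (Equiv.refl (Fin c))).symm x) h
  simp only [permAct1] at this h
  have h2 : u (i, j) = (Finsupp.equivMapDomain (Equiv.prodCongr σ (Equiv.refl (Fin c))) u)
      (σ i, j) := by
    rw [Finsupp.equivMapDomain_apply]
    congr 1
    simp
  rw [h2, h]
  rfl

/-- Extend an injective map on a finite set of naturals to a finitary permutation. -/
lemma exists_finperm_agree (s : Finset ℕ) (φ : ℕ → ℕ) (hinj : Set.InjOn φ s) :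
    ∃ σ : Equiv.Perm ℕ, IsFinPerm σ ∧ ∀ t ∈ s, σ t = φ t := by
  classical
  induction s using Finset.induction with
  | empty => exact ⟨Equiv.refl ℕ, isFinPerm_refl, by simp⟩
  | @insert a s ha ih =>
    obtain ⟨σ, hσfin, hσ⟩ := ih (hinj.mono (by intro x hx; simp only [Finset.coe_insert, Set.mem_insert_iff]; exact Or.inr hx))
    refine ⟨σ.trans (Equiv.swap (σ a) (φ a)), isFinPerm_trans hσfin (isFinPerm_swap _ _), ?_⟩
    intro t ht
    rcases Finset.mem_insert.mp ht with rfl | hts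
    · simp [Equiv.trans_apply, Equiv.swap_apply_left]
    · have hta : t ≠ a := fun h => ha (h ▸ hts)
      have h1 : σ t = φ t := hσ t hts
      have h2 : φ t ≠ σ a := by
        intro h
        have : σ t ≠ σ a := fun hh => hta (σ.injective hh)
        exact this (h1.trans h)
      have h3 : φ t ≠ φ a := by
        intro h
        exact hta (hinj (by simp [hts]) (by simp) h)
      simp only [Equiv.trans_apply, h1]
      exact Equiv.swap_apply_of_ne_of_ne h2 h3

end PermInfra
section PWO

variable (c : ℕ)

/-- The coordinatewise square order on columns. -/
def rcol (x y : Fin c → ℤ) : Prop := ∀ j, 0 ≤ x j * y j ∧ |x j| ≤ |y j|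

lemma rcol_iff_toNat (x y : Fin c → ℤ) :
    rcol c x y ↔ ∀ j : Fin c, (x j).toNat ≤ (y j).toNat ∧ (-(x j)).toNat ≤ (-(y j)).toNat := by
  unfold rcol
  refine forall_congr' fun j => ?_
  rw [Int.mul_nonneg_iff, abs_le_iff_natAbs_le]
  omega

instance : IsRefl (Fin c → ℤ) (rcol c) := ⟨fun x j => ⟨mul_self_nonneg _, le_refl _⟩⟩

instance : IsTrans (Fin c → ℤ) (rcol c) := by
  constructor
  intro a b d hab hbd j
  obtain ⟨h1, h2⟩ := hab j
  obtain ⟨h3, h4⟩ := hbd j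
  rw [Int.mul_nonneg_iff] at h1 h3
  rw [abs_le_iff_natAbs_le] at h2 h4
  rw [Int.mul_nonneg_iff, abs_le_iff_natAbs_le]
  omega

lemma pwo_rcol : (Set.univ : Set (Fin c → ℤ)).PartiallyWellOrderedOn (rcol c) := by
  rw [Set.partiallyWellOrderedOn_iff_exists_lt]
  intro f _
  haveI hwo : ∀ i : Fin c × Bool, IsWellOrder ((fun _ => ℕ) i) (· < ·) := fun _ => inferInstance
  obtain ⟨m, n, hmn, hle⟩ : ∃ m n, m < n ∧
      (fun k (p : Fin c × Bool) => if p.2 then (f k p.1).toNat else (-(f k p.1)).toNat) m ≤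
      (fun k (p : Fin c × Bool) => if p.2 then (f k p.1).toNat else (-(f k p.1)).toNat) n :=
    (Set.PartiallyWellOrderedOn.pi (ι := Fin c × Bool) (α := fun _ => ℕ)
      (r := fun _ => (· ≤ ·)) (s := fun _ => Set.univ)
      (fun _ => (Set.IsWF.of_wellFoundedLT _).isPWO)).exists_lt (fun _ => by simp)
  refine ⟨m, n, hmn, ?_⟩
  rw [rcol_iff_toNat]
  rw [Pi.le_def] at hle
  intro j
  exact ⟨by simpa using hle (j, true), by simpa using hle (j, false)⟩

variable {c}

/-- A bound on the first coordinates of the support. -/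
noncomputable def bnd (u : ℕ × Fin c →₀ ℤ) : ℕ := (u.support.sup fun p => p.1) + 1

lemma lt_bnd {u : ℕ × Fin c →₀ ℤ} {p : ℕ × Fin c} (h : u p ≠ 0) : p.1 < bnd u :=
  Nat.lt_succ_of_le (Finset.le_sup (f := fun p => p.1) (Finsupp.mem_support_iff.mpr h))

/-- The list of the first `bnd u` columns of `u`. -/
noncomputable def lst (u : ℕ × Fin c →₀ ℤ) : List (Fin c → ℤ) :=
  (List.range (bnd u)).map (fun i j => u (i, j))

lemma lst_length (u : ℕ × Fin c →₀ ℤ) : (lst u).length = bnd u := by simp [lst]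

lemma lst_get (u : ℕ × Fin c →₀ ℤ) (t : Fin (lst u).length) :
    (lst u).get t = fun j => u (t.1, j) := by
  rw [List.get_eq_getElem]
  simp [lst]

/-- The key partial-well-order statement: in any sequence, some element is
`⊑`-below a later one up to a finitary permutation. -/
lemma exists_sym_sqle (f : ℕ → (ℕ × Fin c →₀ ℤ)) :
    ∃ m n, m < n ∧ ∃ σ, IsFinPerm σ ∧ Sqle (permAct1 c σ (f m)) (f n) := by
  classical
  haveI : IsPreorder (Fin c → ℤ) (rcol c) :=
    { refl := fun x j => ⟨mul_self_nonneg _, le_refl _⟩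
      trans := fun _ _ _ => trans_of (rcol c) }
  obtain ⟨m, n, hmn, hsub⟩ :=
    (Set.PartiallyWellOrderedOn.partiallyWellOrderedOn_sublistForall₂ (rcol c) (pwo_rcol c)).exists_lt
      (f := fun k => lst (f k)) (fun k x _ => Set.mem_univ x)
  refine ⟨m, n, hmn, ?_⟩
  rw [List.sublistForall₂_iff] at hsub
  obtain ⟨l, hf2, hsl⟩ := hsub
  rw [List.sublist_iff_exists_fin_orderEmbedding_get_eq] at hsl
  obtain ⟨e, he⟩ := hsl
  rw [List.forall₂_iff_get] at hf2
  obtain ⟨hlen, hget⟩ := hf2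
  have hNa : l.length = bnd (f m) := by rw [← hlen, lst_length]
  set φ : ℕ → ℕ := fun t => if h : t < l.length then (e ⟨t, h⟩ : Fin (lst (f n)).length).1 else t
    with hφ
  have hφlt : ∀ (t : ℕ) (h : t < l.length), φ t = (e ⟨t, h⟩ : Fin (lst (f n)).length).1 := by
    intro t h
    simp only [hφ, dif_pos h]
  have hrc : ∀ (t : ℕ) (h : t < l.length),
      rcol c (fun j => f m (t, j)) (fun j => f n (φ t, j)) := by
    intro t h
    have h' : t < (lst (f m)).length := by rw [lst_length, ← hNa]; exact h
    have hg := hget t h' h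
    have hev := he ⟨t, h⟩
    rw [hev] at hg
    rw [lst_get, lst_get] at hg
    rwa [hφlt t h]
  have hinj : Set.InjOn φ (Finset.range l.length : Finset ℕ) := by
    intro t ht t' ht' hh
    simp only [Finset.coe_range, Set.mem_Iio] at ht ht'
    rw [hφlt t ht, hφlt t' ht'] at hh
    have : e ⟨t, ht⟩ = e ⟨t', ht'⟩ := Fin.ext hh
    have := e.injective this
    exact congrArg Fin.val this
  obtain ⟨σ, hσfin, hσ⟩ := exists_finperm_agree (Finset.range l.length) φ hinj
  refine ⟨σ, hσfin, ?_⟩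
  rintro ⟨i, j⟩
  rw [permAct1_apply]
  set t := σ.symm i with htdef
  have hσt : σ t = i := Equiv.apply_symm_apply σ i
  by_cases ht : t < l.length
  · have hiφ : i = φ t := by rw [← hσt, hσ t (Finset.mem_range.mpr ht)]
    obtain ⟨h1, h2⟩ := hrc t ht j
    rw [← hiφ] at h1 h2
    exact ⟨h1, h2⟩
  · have hz : f m (t, j) = 0 := by
      by_contra h
      exact ht (by rw [hNa]; exact lt_bnd (p := (t, j)) h)
    rw [hz]
    simp

end PWO
section Orbits

variable (c : ℕ)

/-- The orbit equivalence relation for the `Sym`-action. -/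
def orbSetoid : Setoid (ℕ × Fin c →₀ ℤ) where
  r u v := ∃ σ, IsFinPerm σ ∧ v = permAct1 c σ u
  iseqv := by
    constructor
    · intro u
      exact ⟨Equiv.refl ℕ, isFinPerm_refl, (permAct1_refl u).symm⟩
    · rintro u v ⟨σ, hσ, rfl⟩
      exact ⟨σ.symm, isFinPerm_symm hσ, (permAct1_symm_cancel σ u).symm⟩
    · rintro u v w ⟨σ, hσ, rfl⟩ ⟨τ, hτ, rfl⟩
      exact ⟨σ.trans τ, isFinPerm_trans hσ hτ, permAct1_trans σ τ u⟩

/-- The Graver basis of an invariant lattice meets only finitely many orbits. -/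
lemma graver_orbit_finite (L : AddSubgroup (ℕ × Fin c →₀ ℤ))
    (hL : ∀ σ, IsFinPerm σ → ∀ u ∈ L, permAct1 c σ u ∈ L) :
    ∃ B : Finset (ℕ × Fin c →₀ ℤ), ↑B ⊆ GraverBasis (L : Set (ℕ × Fin c →₀ ℤ)) ∧
      GraverBasis (L : Set (ℕ × Fin c →₀ ℤ)) ⊆ symOrbit1 c ↑B := by
  classical
  set S : Set (ℕ × Fin c →₀ ℤ) := GraverBasis (L : Set (ℕ × Fin c →₀ ℤ)) with hSdef
  set q : (ℕ × Fin c →₀ ℤ) → Quotient (orbSetoid c) := Quotient.mk (orbSetoid c) with hq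
  have hfin : (q '' S).Finite := by
    by_contra hinf
    have hinf : (q '' S).Infinite := hinf
    set e := hinf.natEmbedding with he
    have hchoice : ∀ k : ℕ, ∃ x, x ∈ S ∧ q x = (e k : Quotient (orbSetoid c)) := fun k => (e k).2
    choose g hgS hgq using hchoice
    obtain ⟨m, n, hmn, σ, hσ, hsq⟩ := exists_sym_sqle g
    have h1 : permAct1 c σ (g m) ∈ L := hL σ hσ _ (hgS m).1
    have h2 : permAct1 c σ (g m) ≠ 0 := by
      intro h
      exact (hgS m).2.1 (permAct1_eq_zero h)
    have h3 : permAct1 c σ (g m) = g n := (hgS n).2.2 _ h1 h2 hsq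
    have h4 : q (g m) = q (g n) := Quotient.sound ⟨σ, hσ, h3.symm⟩
    rw [hgq m, hgq n] at h4
    have := e.injective (Subtype.ext h4)
    omega
  have hrep : ∃ rep : Quotient (orbSetoid c) → (ℕ × Fin c →₀ ℤ),
      ∀ y ∈ q '' S, rep y ∈ S ∧ q (rep y) = y := by
    choose ff hf1 hf2 using fun y : ↥(q '' S) => y.2
    refine ⟨fun y => if h : y ∈ q '' S then ff ⟨y, h⟩ else 0, ?_⟩
    intro y hy
    simp only [dif_pos hy]
    exact ⟨hf1 ⟨y, hy⟩, hf2 ⟨y, hy⟩⟩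
  obtain ⟨rep, hrep⟩ := hrep
  refine ⟨hfin.toFinset.image rep, ?_, ?_⟩
  · intro b hb
    simp only [Finset.coe_image, Set.mem_image, Finset.mem_coe, Set.Finite.mem_toFinset]
      at hb
    obtain ⟨y, hy, rfl⟩ := hb
    exact (hrep y hy).1
  · intro u hu
    have hquS : q u ∈ q '' S := ⟨u, hu, rfl⟩
    have hb : rep (q u) ∈ hfin.toFinset.image rep := by
      refine Finset.mem_image.mpr ⟨q u, ?_, rfl⟩
      rwa [Set.Finite.mem_toFinset]
    obtain ⟨hrS, hrq⟩ := hrep (q u) hquS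
    have hrel : (orbSetoid c).r (rep (q u)) u := Quotient.exact hrq
    obtain ⟨σ, hσ, hσu⟩ := hrel
    exact ⟨σ, hσ, rep (q u), hb, hσu⟩

end Orbits
/-- For `I = ℕ × [c]`, every `Sym`-invariant lattice `L ⊆ ℤ^{(I)}`
has a finite equivariant Markov basis. -/
theorem finite_equivariant_markov_basis (c : ℕ) (hc : 0 < c)
    (L : AddSubgroup (ℕ × Fin c →₀ ℤ))
    (hL : ∀ σ, IsFinPerm σ → ∀ u ∈ L, permAct1 c σ u ∈ L) :
    ∃ B : Finset (ℕ × Fin c →₀ ℤ), ↑B ⊆ (L : Set (ℕ × Fin c →₀ ℤ)) ∧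
      IsMarkovBasis (L : Set (ℕ × Fin c →₀ ℤ)) (symOrbit1 c ↑B) := by
  obtain ⟨B, hBG, hGB⟩ := graver_orbit_finite c L hL
  refine ⟨B, ?_, ?_⟩
  · intro b hb
    exact (hBG hb).1
  · refine graver_markov L (symOrbit1 c ↑B) ?_
    exact hGB
end

section
/- Let L ⊆ ℤ^(ℕ) be a Sym-invariant lattice and suppose H is a finite equivariant Hilbert basis of the monoid M = L ∩ ℤ_{≥0}^(ℕ), i.e. H ⊆ M is finite and Sym(H) is the Hilbert basis of M. Then L has a finite equivariant Graver basis G (a finite G ⊆ L with Sym(G) equal to the Graver basis of L) satisfying (H ∪ −H) ⊆ G ⊆ (H ∪ −H) ∪ {g_L·(e_1 − e_2), −g_L·(e_1 − e_2)}. -/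
open Finsupp

/-! ### Auxiliary lemmas -/

section Aux
open Finsupp

lemma permAct0_apply' (σ : Equiv.Perm ℕ) (u : ℕ →₀ ℤ) (j : ℕ) :
    permAct0 σ u j = u (σ.symm j) := rfl

lemma permAct0_one' (u : ℕ →₀ ℤ) : permAct0 1 u = u := by
  ext j; rw [permAct0_apply']; rfl

lemma permAct0_add' (σ : Equiv.Perm ℕ) (u v : ℕ →₀ ℤ) :
    permAct0 σ (u + v) = permAct0 σ u + permAct0 σ v := by
  ext j; simp [permAct0_apply']

lemma permAct0_neg' (σ : Equiv.Perm ℕ) (u : ℕ →₀ ℤ) :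
    permAct0 σ (-u) = - permAct0 σ u := by
  ext j; simp [permAct0_apply']

lemma permAct0_sub' (σ : Equiv.Perm ℕ) (u v : ℕ →₀ ℤ) :
    permAct0 σ (u - v) = permAct0 σ u - permAct0 σ v := by
  ext j; simp [permAct0_apply']

lemma permAct0_smul' (σ : Equiv.Perm ℕ) (z : ℤ) (u : ℕ →₀ ℤ) :
    permAct0 σ (z • u) = z • permAct0 σ u := by
  ext j; simp [permAct0_apply']

lemma permAct0_single' (σ : Equiv.Perm ℕ) (i : ℕ) (z : ℤ) :
    permAct0 σ (Finsupp.single i z) = Finsupp.single (σ i) z := by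
  simp [permAct0, Finsupp.equivMapDomain_single]

lemma permAct0_comp' (σ τ : Equiv.Perm ℕ) (u : ℕ →₀ ℤ) :
    permAct0 σ (permAct0 τ u) = permAct0 (σ * τ) u := by
  ext j; simp [permAct0_apply']; rfl

lemma permAct0_eq_zero_iff' (σ : Equiv.Perm ℕ) (u : ℕ →₀ ℤ) :
    permAct0 σ u = 0 ↔ u = 0 := by
  constructor
  · intro h
    ext m
    have := congrArg (fun v : ℕ →₀ ℤ => v (σ m)) h
    simpa [permAct0_apply'] using this
  · rintro rfl; ext j; simp [permAct0_apply']

lemma isFinPerm_one' : IsFinPerm 1 := by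
  simp [IsFinPerm]

lemma isFinPerm_swap' (i j : ℕ) : IsFinPerm (Equiv.swap i j) := by
  apply Set.Finite.subset (Set.Finite.insert i (Set.finite_singleton j))
  intro m hm
  simp only [Set.mem_setOf_eq] at hm
  by_contra hc
  simp only [Set.mem_insert_iff, Set.mem_singleton_iff] at hc
  push_neg at hc
  exact hm (Equiv.swap_apply_of_ne_of_ne hc.1 hc.2)

lemma isFinPerm_mul' {σ τ : Equiv.Perm ℕ} (hσ : IsFinPerm σ) (hτ : IsFinPerm τ) :
    IsFinPerm (σ * τ) := by
  apply Set.Finite.subset (hσ.union hτ)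
  intro m hm
  simp only [Set.mem_setOf_eq, Equiv.Perm.mul_apply] at hm
  by_contra hc
  simp only [Set.mem_union, Set.mem_setOf_eq] at hc
  push_neg at hc
  rw [hc.2] at hm; exact hm hc.1

lemma isFinPerm_inv' {σ : Equiv.Perm ℕ} (hσ : IsFinPerm σ) : IsFinPerm σ⁻¹ := by
  have hsub : {i | σ⁻¹ i ≠ i} ⊆ σ '' {i | σ i ≠ i} := by
    intro m hm
    simp only [Set.mem_setOf_eq] at hm
    exact ⟨σ⁻¹ m, by simpa using fun h => hm (by exact h.symm), by simp⟩
  exact ((hσ.image σ).subset hsub)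

lemma exists_finperm_two' {a b c d : ℕ} (hab : a ≠ b) (hcd : c ≠ d) :
    ∃ σ : Equiv.Perm ℕ, IsFinPerm σ ∧ σ a = c ∧ σ b = d := by
  refine ⟨Equiv.swap (Equiv.swap a c b) d * Equiv.swap a c,
    isFinPerm_mul' (isFinPerm_swap' _ _) (isFinPerm_swap' _ _), ?_, ?_⟩
  · have h1 : Equiv.swap a c b ≠ c := by
      intro h
      exact hab (Equiv.injective _ (by rw [h, Equiv.swap_apply_left]))
    simp only [Equiv.Perm.mul_apply, Equiv.swap_apply_left]
    exact Equiv.swap_apply_of_ne_of_ne (Ne.symm h1) hcd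
  · simp only [Equiv.Perm.mul_apply, Equiv.swap_apply_left]

noncomputable def fsWt (u : ℕ →₀ ℤ) : ℤ := u.sum fun _ z => z

lemma fsWt_add (u v : ℕ →₀ ℤ) : fsWt (u + v) = fsWt u + fsWt v :=
  Finsupp.sum_add_index' (fun _ => rfl) (fun _ _ _ => rfl)

lemma fsWt_nonneg {u : ℕ →₀ ℤ} (h : FsNonneg u) : 0 ≤ fsWt u :=
  Finset.sum_nonneg fun i _ => h i

lemma fsWt_pos {u : ℕ →₀ ℤ} (h : FsNonneg u) (h0 : u ≠ 0) : 0 < fsWt u := by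
  apply Finset.sum_pos
  · intro i hi
    exact lt_of_le_of_ne (h i) (Ne.symm (Finsupp.mem_support_iff.mp hi))
  · exact Finsupp.support_nonempty_iff.mpr h0

section Lattice
variable (L : AddSubgroup (ℕ →₀ ℤ))

lemma mem_closure_irr : ∀ u ∈ {u : ℕ →₀ ℤ | u ∈ L ∧ FsNonneg u},
    u ∈ AddSubmonoid.closure {v | IsIrredElem {u : ℕ →₀ ℤ | u ∈ L ∧ FsNonneg u} v} := by
  set M := {u : ℕ →₀ ℤ | u ∈ L ∧ FsNonneg u} with hM
  suffices h : ∀ n : ℕ, ∀ u, u ∈ M → (fsWt u).toNat = n →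
      u ∈ AddSubmonoid.closure {v | IsIrredElem M v} by
    intro u hu; exact h _ u hu rfl
  intro n
  induction n using Nat.strong_induction_on with
  | _ n ih =>
    intro u hu hn
    by_cases h0 : u = 0
    · subst h0; exact zero_mem _
    by_cases hirr : IsIrredElem M u
    · exact AddSubmonoid.subset_closure hirr
    unfold IsIrredElem at hirr
    push_neg at hirr
    obtain ⟨v, hv, w, hw, huvw, hv0, hw0⟩ := hirr hu h0
    have hwt : fsWt u = fsWt v + fsWt w := by rw [huvw, fsWt_add]
    have hv1 := fsWt_pos hv.2 hv0
    have hw1 := fsWt_pos hw.2 hw0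
    have hu1 := fsWt_nonneg hu.2
    subst hn
    rw [huvw]
    exact add_mem
      (ih (fsWt v).toNat (by omega) v hv rfl)
      (ih (fsWt w).toNat (by omega) w hw rfl)

lemma irr_subset_gen (A : Set (ℕ →₀ ℤ)) (hA : A ⊆ {u : ℕ →₀ ℤ | u ∈ L ∧ FsNonneg u})
    (hclo : (AddSubmonoid.closure A : Set (ℕ →₀ ℤ)) = {u : ℕ →₀ ℤ | u ∈ L ∧ FsNonneg u}) :
    {v | IsIrredElem {u : ℕ →₀ ℤ | u ∈ L ∧ FsNonneg u} v} ⊆ A := by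
  set M := {u : ℕ →₀ ℤ | u ∈ L ∧ FsNonneg u} with hM
  intro u hu
  have humem : u ∈ AddSubmonoid.closure A := by
    rw [← SetLike.mem_coe, hclo]; exact hu.1
  obtain ⟨l, hl, hsum⟩ := AddSubmonoid.exists_multiset_of_mem_closure humem
  clear humem
  induction l using Multiset.induction_on generalizing u with
  | empty =>
    exact absurd (by simpa using hsum.symm) hu.2.1
  | cons a t iht =>
    have ha : a ∈ A := hl a (Multiset.mem_cons_self a t)
    have ht : ∀ y ∈ t, y ∈ A := fun y hy => hl y (Multiset.mem_cons_of_mem hy)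
    have htsum : t.sum ∈ M := by
      rw [← hclo, SetLike.mem_coe]
      exact AddSubmonoid.multiset_sum_mem _ _
        (fun y hy => AddSubmonoid.subset_closure (ht y hy))
    have heq : u = a + t.sum := by rw [← hsum]; simp
    rcases hu.2.2 a (hA ha) t.sum htsum heq with h | h
    · exact iht hu ht (by rw [← hsum]; simp [h])
    · rw [heq, h, add_zero]; exact ha

variable (hL : ∀ σ, IsFinPerm σ → ∀ u ∈ L, permAct0 σ u ∈ L)

include hL in
lemma entry_diff_mem {u : ℕ →₀ ℤ} (hu : u ∈ L) (i : ℕ) {a b : ℕ} (hab : a ≠ b) :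
    (u i) • (Finsupp.single a (1:ℤ) - Finsupp.single b 1) ∈ L := by
  classical
  set j := max i (u.support.sup id) + 1 with hj
  have hji : i ≠ j := by omega
  have huj : u j = 0 := by
    by_contra h
    have hjs : j ∈ u.support := Finsupp.mem_support_iff.mpr h
    have := Finset.le_sup (f := id) hjs
    simp only [id] at this
    omega
  have key : u - permAct0 (Equiv.swap i j) u
      = (u i) • (Finsupp.single i (1:ℤ) - Finsupp.single j 1) := by
    ext m
    rw [Finsupp.sub_apply, permAct0_apply']
    simp only [Equiv.symm_swap]
    rcases eq_or_ne m i with rfl | hmi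
    · rw [Equiv.swap_apply_left]
      simp [huj, Finsupp.single_apply, hji, hji.symm]
    · rcases eq_or_ne m j with rfl | hmj
      · rw [Equiv.swap_apply_right]
        simp [Finsupp.single_apply, hji, hji.symm, huj]
      · rw [Equiv.swap_apply_of_ne_of_ne hmi hmj]
        simp [Finsupp.single_apply, Ne.symm hmi, Ne.symm hmj]
  have hmem : (u i) • (Finsupp.single i (1:ℤ) - Finsupp.single j 1) ∈ L := by
    rw [← key]
    exact sub_mem hu (hL _ (isFinPerm_swap' i j) u hu)
  obtain ⟨σ, hσ, hσi, hσj⟩ := exists_finperm_two' hji hab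
  have hres := hL σ hσ _ hmem
  rwa [permAct0_smul', permAct0_sub', permAct0_single', permAct0_single',
    hσi, hσj] at hres

variable (g : ℤ)
    (hgL : AddSubgroup.closure {z : ℤ | ∃ u ∈ L, ∃ i : ℕ, u i = z}
      = AddSubgroup.zmultiples g)

include hgL in
lemma g_dvd_entry {u : ℕ →₀ ℤ} (hu : u ∈ L) (i : ℕ) : g ∣ u i := by
  have h1 : u i ∈ AddSubgroup.closure {z : ℤ | ∃ u ∈ L, ∃ i : ℕ, u i = z} :=
    AddSubgroup.subset_closure ⟨u, hu, i, rfl⟩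
  rw [hgL, AddSubgroup.mem_zmultiples_iff] at h1
  obtain ⟨k, hk⟩ := h1
  exact ⟨k, by rw [← hk]; simp [mul_comm]⟩

include hL hgL in
lemma g_diff_mem {a b : ℕ} (hab : a ≠ b) :
    g • (Finsupp.single a (1:ℤ) - Finsupp.single b 1) ∈ L := by
  set w := Finsupp.single a (1:ℤ) - Finsupp.single b 1 with hw
  have hS : AddSubgroup.closure {z : ℤ | ∃ u ∈ L, ∃ i : ℕ, u i = z}
      ≤ AddSubgroup.comap (zmultiplesHom _ w) L := by
    rw [AddSubgroup.closure_le]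
    rintro z ⟨u, hu, i, rfl⟩
    exact entry_diff_mem L hL hu i hab
  have hgmem : g ∈ AddSubgroup.comap (zmultiplesHom _ w) L := by
    apply hS
    rw [hgL]
    exact AddSubgroup.mem_zmultiples g
  exact hgmem

include hL in
lemma graver_perm {u : ℕ →₀ ℤ} (hu : u ∈ GraverBasis (L : Set (ℕ →₀ ℤ)))
    {σ : Equiv.Perm ℕ} (hσ : IsFinPerm σ) :
    permAct0 σ u ∈ GraverBasis (L : Set (ℕ →₀ ℤ)) := by
  obtain ⟨hu1, hu2, hu3⟩ := hu
  refine ⟨hL σ hσ u hu1, by rwa [Ne, permAct0_eq_zero_iff'], ?_⟩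
  intro v hv hv0 hsq
  have hv' : permAct0 σ⁻¹ v ∈ L := hL σ⁻¹ (isFinPerm_inv' hσ) v hv
  have hv0' : permAct0 σ⁻¹ v ≠ 0 := by rwa [Ne, permAct0_eq_zero_iff']
  have hsq' : Sqle (permAct0 σ⁻¹ v) u := by
    intro m
    have h := hsq (σ m)
    have e1 : permAct0 σ⁻¹ v m = v (σ m) := by
      rw [permAct0_apply']; rfl
    have e2 : permAct0 σ u (σ m) = u m := by
      rw [permAct0_apply']; simp
    rw [e1]
    rw [e2] at h
    exact h
  have := hu3 _ hv' hv0' hsq'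
  have := congrArg (permAct0 σ) this
  rwa [permAct0_comp', mul_inv_cancel, permAct0_one'] at this

lemma graver_neg {u : ℕ →₀ ℤ} (hu : u ∈ GraverBasis (L : Set (ℕ →₀ ℤ))) :
    -u ∈ GraverBasis (L : Set (ℕ →₀ ℤ)) := by
  obtain ⟨hu1, hu2, hu3⟩ := hu
  refine ⟨neg_mem hu1, by simpa using hu2, ?_⟩
  intro v hv hv0 hsq
  have hsq' : Sqle (-v) u := by
    intro m
    have h := hsq m
    constructor
    · have e : (-v) m * u m = v m * (-u) m := by
        simp only [Finsupp.neg_apply]; ring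
      rw [e]; exact h.1
    · simpa using h.2
  have := hu3 (-v) (neg_mem hv) (by simpa using hv0) hsq'
  rw [← this]; simp

lemma irr_subset_graver {u : ℕ →₀ ℤ}
    (hu : IsIrredElem {u : ℕ →₀ ℤ | u ∈ L ∧ FsNonneg u} u) :
    u ∈ GraverBasis (L : Set (ℕ →₀ ℤ)) := by
  obtain ⟨⟨huL, hun⟩, hu0, huirr⟩ := hu
  refine ⟨huL, hu0, ?_⟩
  intro v hv hv0 hsq
  have hvn : FsNonneg v := by
    intro m
    have h := hsq m
    rcases lt_or_ge (v m) 0 with hlt | hle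
    · exfalso
      have hum : 0 ≤ u m := hun m
      rcases eq_or_lt_of_le hum with he | hp
      · have := h.2
        rw [← he] at this
        simp at this
        omega
      · nlinarith [h.1]
    · exact hle
  have hvle : ∀ m, v m ≤ u m := by
    intro m
    have h := (hsq m).2
    have := hun m
    have := hvn m
    rw [abs_of_nonneg (hvn m), abs_of_nonneg (hun m)] at h
    exact h
  have hsub : u - v ∈ {u : ℕ →₀ ℤ | u ∈ L ∧ FsNonneg u} := by
    refine ⟨sub_mem huL hv, fun m => ?_⟩
    rw [Finsupp.sub_apply]
    have := hvle m; omega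
  rcases huirr v ⟨hv, hvn⟩ (u - v) hsub (by abel) with h | h
  · exact absurd h hv0
  · exact (sub_eq_zero.mp h).symm

lemma graver_nonneg_irr {u : ℕ →₀ ℤ}
    (hu : u ∈ GraverBasis (L : Set (ℕ →₀ ℤ))) (hun : FsNonneg u) :
    IsIrredElem {u : ℕ →₀ ℤ | u ∈ L ∧ FsNonneg u} u := by
  obtain ⟨hu1, hu2, hu3⟩ := hu
  refine ⟨⟨hu1, hun⟩, hu2, ?_⟩
  rintro v ⟨hvL, hvn⟩ w ⟨hwL, hwn⟩ huvw
  by_contra hc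
  push_neg at hc
  obtain ⟨hv0, hw0⟩ := hc
  have hsq : Sqle v u := by
    intro m
    have h1 := hvn m
    have h2 := hwn m
    have h3 : u m = v m + w m := by rw [huvw]; simp
    constructor
    · nlinarith
    · rw [abs_of_nonneg h1, abs_of_nonneg (by omega : (0:ℤ) ≤ u m)]; omega
  have hvu := hu3 v hvL hv0 hsq
  apply hw0
  have hw : w = u - v := eq_sub_of_add_eq' huvw.symm
  rw [hw, hvu, sub_self]

end Lattice
end Aux


section Aux2
open Finsupp

noncomputable def Msub (L : AddSubgroup (ℕ →₀ ℤ)) : AddSubmonoid (ℕ →₀ ℤ) where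
  carrier := {u | u ∈ L ∧ FsNonneg u}
  zero_mem' := ⟨zero_mem L, fun i => by simp⟩
  add_mem' := by
    rintro a b ⟨ha1, ha2⟩ ⟨hb1, hb2⟩
    refine ⟨add_mem ha1 hb1, fun i => ?_⟩
    have := ha2 i; have := hb2 i
    rw [Finsupp.add_apply]; omega

lemma closure_irr_eq (L : AddSubgroup (ℕ →₀ ℤ)) :
    (AddSubmonoid.closure {v | IsIrredElem {u : ℕ →₀ ℤ | u ∈ L ∧ FsNonneg u} v}
      : Set (ℕ →₀ ℤ)) = {u : ℕ →₀ ℤ | u ∈ L ∧ FsNonneg u} := by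
  apply Set.Subset.antisymm
  · intro x hx
    have hle : AddSubmonoid.closure {v | IsIrredElem {u : ℕ →₀ ℤ | u ∈ L ∧ FsNonneg u} v}
        ≤ Msub L := AddSubmonoid.closure_le.mpr (fun v hv => hv.1)
    exact hle hx
  · exact mem_closure_irr L

lemma single_move (L : AddSubgroup (ℕ →₀ ℤ))
    (hL : ∀ σ, IsFinPerm σ → ∀ u ∈ L, permAct0 σ u ∈ L)
    {z : ℤ} {a c : ℕ} (h : Finsupp.single a z ∈ L) : Finsupp.single c z ∈ L := by
  have := hL _ (isFinPerm_swap' a c) _ h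
  rwa [permAct0_single', Equiv.swap_apply_left] at this

lemma gdiff_apply (g : ℤ) {i j : ℕ} (hij : i ≠ j) (m : ℕ) :
    ((g • (Finsupp.single i (1:ℤ) - Finsupp.single j 1) : ℕ →₀ ℤ)) m
      = if m = i then g else if m = j then -g else 0 := by
  rw [Finsupp.smul_apply, Finsupp.sub_apply, Finsupp.single_apply, Finsupp.single_apply]
  rcases eq_or_ne m i with rfl | h1
  · rw [if_pos rfl, if_pos rfl, if_neg (fun h => hij h.symm)]
    simp
  · rw [if_neg h1, if_neg (fun h => h1 h.symm)]
    rcases eq_or_ne m j with rfl | h2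
    · rw [if_pos rfl, if_pos rfl]; simp
    · rw [if_neg (fun h => h2 h.symm), if_neg h2]; simp

lemma graver_mixed_eq (L : AddSubgroup (ℕ →₀ ℤ))
    (hL : ∀ σ, IsFinPerm σ → ∀ u ∈ L, permAct0 σ u ∈ L)
    (g : ℤ) (hg : 0 ≤ g)
    (hgL : AddSubgroup.closure {z : ℤ | ∃ u ∈ L, ∃ i : ℕ, u i = z}
      = AddSubgroup.zmultiples g)
    {u : ℕ →₀ ℤ} {i j : ℕ}
    (hu : u ∈ GraverBasis (L : Set (ℕ →₀ ℤ))) (hi : 0 < u i) (hj : u j < 0) :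
    u = g • (Finsupp.single i (1:ℤ) - Finsupp.single j 1) := by
  have hij : i ≠ j := by rintro rfl; omega
  have hdi := g_dvd_entry L g hgL hu.1 i
  have hdj := g_dvd_entry L g hgL hu.1 j
  have hg0 : 0 < g := by
    rcases lt_or_eq_of_le hg with h | h
    · exact h
    · exfalso; rw [← h] at hdi; have := zero_dvd_iff.mp hdi; omega
  have hgi : g ≤ u i := Int.le_of_dvd hi hdi
  have hgj : g ≤ -u j := Int.le_of_dvd (by omega) (dvd_neg.mpr hdj)
  have hmem := g_diff_mem L hL g hgL hij
  have hsq : Sqle (g • (Finsupp.single i (1:ℤ) - Finsupp.single j 1)) u := by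
    intro m
    rw [gdiff_apply g hij]
    rcases eq_or_ne m i with rfl | h1
    · rw [if_pos rfl]
      refine ⟨by nlinarith, ?_⟩
      rw [abs_of_pos hg0, abs_of_pos hi]; exact hgi
    · rw [if_neg h1]
      rcases eq_or_ne m j with rfl | h2
      · rw [if_pos rfl]
        refine ⟨by nlinarith, ?_⟩
        rw [abs_neg, abs_of_pos hg0, abs_of_neg hj]; exact hgj
      · rw [if_neg h2]; simp
  have hnz : g • (Finsupp.single i (1:ℤ) - Finsupp.single j 1) ≠ 0 := by
    intro h
    have := congrArg (fun v : ℕ →₀ ℤ => v i) h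
    simp only [Finsupp.coe_zero, Pi.zero_apply] at this
    rw [gdiff_apply g hij, if_pos rfl] at this
    omega
  exact (hu.2.2 _ hmem hnz hsq).symm

lemma graver_gw (L : AddSubgroup (ℕ →₀ ℤ))
    (hL : ∀ σ, IsFinPerm σ → ∀ u ∈ L, permAct0 σ u ∈ L)
    (g : ℤ) (hg : 0 ≤ g)
    (hgL : AddSubgroup.closure {z : ℤ | ∃ u ∈ L, ∃ i : ℕ, u i = z}
      = AddSubgroup.zmultiples g)
    (hnP : Finsupp.single 0 g ∉ L) :
    g • (Finsupp.single 0 (1:ℤ) - Finsupp.single 1 1) ∈ GraverBasis (L : Set (ℕ →₀ ℤ)) := by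
  have h01 : (0:ℕ) ≠ 1 := by norm_num
  have hg0 : 0 < g := by
    rcases lt_or_eq_of_le hg with h | h
    · exact h
    · exfalso; apply hnP; rw [← h, Finsupp.single_zero]; exact zero_mem L
  refine ⟨g_diff_mem L hL g hgL h01, ?_, ?_⟩
  · intro h
    have := congrArg (fun v : ℕ →₀ ℤ => v 0) h
    simp only [Finsupp.coe_zero, Pi.zero_apply] at this
    rw [gdiff_apply g h01, if_pos rfl] at this
    omega
  · intro v hv hv0 hsq
    have hd0 := g_dvd_entry L g hgL hv 0
    have hd1 := g_dvd_entry L g hgL hv 1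
    have h0 := hsq 0
    have h1 := hsq 1
    rw [gdiff_apply g h01, if_pos rfl] at h0
    rw [gdiff_apply g h01, if_neg (by norm_num), if_pos rfl] at h1
    have hvm : ∀ m, m ≠ 0 → m ≠ 1 → v m = 0 := by
      intro m hm0 hm1
      have h := (hsq m).2
      rw [gdiff_apply g h01, if_neg hm0, if_neg hm1] at h
      simp only [abs_zero] at h
      have := abs_nonneg (v m)
      have : |v m| = 0 := le_antisymm h (abs_nonneg _)
      exact abs_eq_zero.mp this
    have hv0c : v 0 = 0 ∨ v 0 = g := by
      rcases eq_or_ne (v 0) 0 with h | h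
      · exact Or.inl h
      · right
        have hp : 0 < v 0 := by
          rcases lt_trichotomy (v 0) 0 with hlt | he | hgt
          · exfalso; nlinarith [h0.1]
          · exact absurd he h
          · exact hgt
        have := Int.le_of_dvd hp hd0
        have habs := h0.2
        rw [abs_of_pos hp, abs_of_pos hg0] at habs
        omega
    have hv1c : v 1 = 0 ∨ v 1 = -g := by
      rcases eq_or_ne (v 1) 0 with h | h
      · exact Or.inl h
      · right
        have hp : v 1 < 0 := by
          rcases lt_trichotomy (v 1) 0 with hlt | he | hgt
          · exact hlt
          · exact absurd he h
          · exfalso; nlinarith [h1.1]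
        have := Int.le_of_dvd (by omega : 0 < -(v 1)) (dvd_neg.mpr hd1)
        have habs := h1.2
        rw [abs_of_neg hp, abs_neg, abs_of_pos hg0] at habs
        omega
    rcases hv0c with hc0 | hc0 <;> rcases hv1c with hc1 | hc1
    · exfalso
      apply hv0
      ext m
      rcases eq_or_ne m 0 with rfl | hm0
      · simpa using hc0
      rcases eq_or_ne m 1 with rfl | hm1
      · simpa using hc1
      · simpa using hvm m hm0 hm1
    · exfalso
      apply hnP
      apply single_move L hL (a := 1)
      have hveq : v = Finsupp.single 1 (-g) := by
        ext m
        rcases eq_or_ne m 0 with rfl | hm0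
        · rw [hc0, Finsupp.single_apply, if_neg (by norm_num)]
        rcases eq_or_ne m 1 with rfl | hm1
        · rw [hc1, Finsupp.single_apply, if_pos rfl]
        · rw [hvm m hm0 hm1, Finsupp.single_apply, if_neg (fun h => hm1 h.symm)]
      have hnegv : -v ∈ L := neg_mem hv
      rw [hveq] at hnegv
      have : -Finsupp.single 1 (-g) = Finsupp.single 1 g := by
        ext m; simp [Finsupp.single_apply]
      rwa [this] at hnegv
    · exfalso
      apply hnP
      have hveq : v = Finsupp.single 0 g := by
        ext m
        rcases eq_or_ne m 0 with rfl | hm0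
        · rw [hc0, Finsupp.single_apply, if_pos rfl]
        rcases eq_or_ne m 1 with rfl | hm1
        · rw [hc1, Finsupp.single_apply, if_neg (by norm_num)]
        · rw [hvm m hm0 hm1, Finsupp.single_apply, if_neg (fun h => hm0 h.symm)]
      rwa [hveq] at hv
    · ext m
      rw [gdiff_apply g h01]
      rcases eq_or_ne m 0 with rfl | hm0
      · rw [if_pos rfl]; exact hc0
      rcases eq_or_ne m 1 with rfl | hm1
      · rw [if_neg (by norm_num), if_pos rfl]; exact hc1
      · rw [if_neg hm0, if_neg hm1]; exact hvm m hm0 hm1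

end Aux2

/-- If `L ⊆ ℤ^{(ℕ)}` is a `Sym`-invariant lattice and `H` is a finite
equivariant Hilbert basis of `M = L ∩ ℤ_{≥0}^{(ℕ)}`, then `L` has a finite equivariant
Graver basis `G` with `±H ⊆ G ⊆ ±H ∪ {± g_L (e₁ - e₂)}`. -/
theorem graver_from_hilbert (L : AddSubgroup (ℕ →₀ ℤ))
    (hL : ∀ σ, IsFinPerm σ → ∀ u ∈ L, permAct0 σ u ∈ L)
    (H : Finset (ℕ →₀ ℤ))
    (hHM : (↑H : Set (ℕ →₀ ℤ)) ⊆ {u | u ∈ L ∧ FsNonneg u})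
    (hHilb : IsHilbertBasis {u : ℕ →₀ ℤ | u ∈ L ∧ FsNonneg u} (symOrbit0 ↑H))
    (g : ℤ) (hg : 0 ≤ g)
    (hgL : AddSubgroup.closure {z : ℤ | ∃ u ∈ L, ∃ i : ℕ, u i = z}
      = AddSubgroup.zmultiples g) :
    ∃ G : Finset (ℕ →₀ ℤ), ↑G ⊆ (L : Set (ℕ →₀ ℤ)) ∧
      symOrbit0 ↑G = GraverBasis (L : Set (ℕ →₀ ℤ)) ∧
      (↑H ∪ -(↑H : Set (ℕ →₀ ℤ))) ⊆ (↑G : Set (ℕ →₀ ℤ)) ∧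
      (↑G : Set (ℕ →₀ ℤ)) ⊆ (↑H ∪ -(↑H : Set (ℕ →₀ ℤ))) ∪
        {g • (Finsupp.single 0 (1 : ℤ) - Finsupp.single 1 (1 : ℤ)),
         -(g • (Finsupp.single 0 (1 : ℤ) - Finsupp.single 1 (1 : ℤ)))} := by
  classical
  have hIrrEq : {v | IsIrredElem {u : ℕ →₀ ℤ | u ∈ L ∧ FsNonneg u} v}
      = symOrbit0 (↑H : Set (ℕ →₀ ℤ)) :=
    Set.Subset.antisymm
      (irr_subset_gen L _ hHilb.1 hHilb.2.1)
      (hHilb.2.2 _ (fun v hv => hv.1) (closure_irr_eq L))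
  have hHsubIrr : (↑H : Set (ℕ →₀ ℤ))
      ⊆ {v | IsIrredElem {u : ℕ →₀ ℤ | u ∈ L ∧ FsNonneg u} v} := by
    intro b hb; rw [hIrrEq]
    exact ⟨1, isFinPerm_one', b, hb, (permAct0_one' b).symm⟩
  have hHGr : ∀ b ∈ H, b ∈ GraverBasis (L : Set (ℕ →₀ ℤ)) :=
    fun b hb => irr_subset_graver L (hHsubIrr hb)
  -- extraction of mixed indices
  have hmixed : ∀ x ∈ GraverBasis (L : Set (ℕ →₀ ℤ)), ¬ FsNonneg x → ¬ FsNonneg (-x) →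
      ∃ i j, 0 < x i ∧ x j < 0 := by
    intro x _ hxn hxn'
    unfold FsNonneg at hxn hxn'
    push_neg at hxn hxn'
    obtain ⟨j, hj⟩ := hxn
    obtain ⟨i, hi⟩ := hxn'
    rw [Finsupp.neg_apply] at hi
    exact ⟨i, j, by omega, by omega⟩
  -- the two backward helpers
  have hback_nonneg : ∀ x ∈ GraverBasis (L : Set (ℕ →₀ ℤ)), FsNonneg x →
      ∃ σ, IsFinPerm σ ∧ ∃ b ∈ H, x = permAct0 σ b := by
    intro x hx hxn
    have hmem : x ∈ symOrbit0 (↑H : Set (ℕ →₀ ℤ)) := by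
      rw [← hIrrEq]; exact graver_nonneg_irr L hx hxn
    obtain ⟨σ, hσ, b, hb, hbe⟩ := hmem
    exact ⟨σ, hσ, b, hb, hbe⟩
  by_cases hP : Finsupp.single 0 g ∈ L
  · -- no mixed Graver elements
    refine ⟨H ∪ H.image (fun x => -x), ?_, ?_, ?_, ?_⟩
    · intro x hx
      simp only [Finset.coe_union, Set.mem_union, Finset.mem_coe, Finset.mem_image] at hx
      rcases hx with hx | ⟨h, hh, rfl⟩
      · exact (hHM hx).1
      · exact neg_mem (hHM hh).1
    · apply Set.Subset.antisymm
      · rintro x ⟨σ, hσ, b, hb, rfl⟩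
        simp only [Finset.coe_union, Set.mem_union, Finset.mem_coe, Finset.mem_image] at hb
        rcases hb with hb | ⟨h, hh, rfl⟩
        · exact graver_perm L hL (hHGr b hb) hσ
        · exact graver_perm L hL (graver_neg L (hHGr h hh)) hσ
      · intro x hx
        by_cases hxn : FsNonneg x
        · obtain ⟨σ, hσ, b, hb, hbe⟩ := hback_nonneg x hx hxn
          exact ⟨σ, hσ, b, by
            simp only [Finset.coe_union, Set.mem_union, Finset.mem_coe]
            exact Or.inl hb, hbe⟩
        by_cases hxn' : FsNonneg (-x)
        · obtain ⟨σ, hσ, b, hb, hbe⟩ := hback_nonneg (-x) (graver_neg L hx) hxn'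
          refine ⟨σ, hσ, -b, ?_, by rw [permAct0_neg', ← hbe, neg_neg]⟩
          simp only [Finset.coe_union, Set.mem_union, Finset.mem_coe, Finset.mem_image]
          exact Or.inr ⟨b, hb, rfl⟩
        · exfalso
          obtain ⟨i, j, hi, hj⟩ := hmixed x hx hxn hxn'
          have hij : i ≠ j := by rintro rfl; omega
          have hdvd := g_dvd_entry L g hgL hx.1 i
          have hg0 : 0 < g := by
            rcases lt_or_eq_of_le hg with h | h
            · exact h
            · exfalso; rw [← h] at hdvd; have := zero_dvd_iff.mp hdvd; omega
          have hvL : Finsupp.single i g ∈ L := single_move L hL hP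
          have hgi : g ≤ x i := Int.le_of_dvd hi hdvd
          have hsq : Sqle (Finsupp.single i g) x := by
            intro m
            rw [Finsupp.single_apply]
            rcases eq_or_ne i m with rfl | hm
            · rw [if_pos rfl]
              refine ⟨by nlinarith, ?_⟩
              rw [abs_of_pos hg0, abs_of_pos hi]; exact hgi
            · rw [if_neg hm]; simp
          have hne : Finsupp.single i g ≠ 0 := by
            rw [Ne, Finsupp.single_eq_zero]; omega
          have heq := hx.2.2 _ hvL hne hsq
          have hxj := congrArg (fun v : ℕ →₀ ℤ => v j) heq
          simp only [Finsupp.single_apply] at hxj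
          rw [if_neg hij] at hxj
          omega
    · intro x hx
      simp only [Finset.coe_union, Set.mem_union, Finset.mem_coe, Finset.mem_image]
      rcases hx with hx | hx
      · exact Or.inl hx
      · exact Or.inr ⟨-x, Set.mem_neg.mp hx, neg_neg x⟩
    · intro x hx
      simp only [Finset.coe_union, Set.mem_union, Finset.mem_coe, Finset.mem_image] at hx
      rcases hx with hx | ⟨h, hh, rfl⟩
      · exact Or.inl (Or.inl hx)
      · exact Or.inl (Or.inr (by rw [Set.mem_neg, neg_neg]; exact hh))
  · -- mixed Graver elements are the ±g(e_i - e_j)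
    have hgw : g • (Finsupp.single 0 (1:ℤ) - Finsupp.single 1 1)
        ∈ GraverBasis (L : Set (ℕ →₀ ℤ)) := graver_gw L hL g hg hgL hP
    refine ⟨(H ∪ H.image (fun x => -x)) ∪
      {g • (Finsupp.single 0 (1:ℤ) - Finsupp.single 1 1),
       -(g • (Finsupp.single 0 (1:ℤ) - Finsupp.single 1 1))}, ?_, ?_, ?_, ?_⟩
    · intro x hx
      simp only [Finset.coe_union, Set.mem_union, Finset.mem_coe, Finset.mem_image,
        Finset.coe_insert, Set.mem_insert_iff, Finset.coe_singleton,
        Set.mem_singleton_iff, Finset.mem_insert, Finset.mem_singleton] at hx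
      rcases hx with (hx | ⟨h, hh, rfl⟩) | (rfl | rfl)
      · exact (hHM hx).1
      · exact neg_mem (hHM hh).1
      · exact hgw.1
      · exact neg_mem hgw.1
    · apply Set.Subset.antisymm
      · rintro x ⟨σ, hσ, b, hb, rfl⟩
        simp only [Finset.coe_union, Set.mem_union, Finset.mem_coe, Finset.mem_image,
          Finset.coe_insert, Set.mem_insert_iff, Finset.coe_singleton,
          Set.mem_singleton_iff, Finset.mem_insert, Finset.mem_singleton] at hb
        rcases hb with (hb | ⟨h, hh, rfl⟩) | (rfl | rfl)
        · exact graver_perm L hL (hHGr b hb) hσ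
        · exact graver_perm L hL (graver_neg L (hHGr h hh)) hσ
        · exact graver_perm L hL hgw hσ
        · exact graver_perm L hL (graver_neg L hgw) hσ
      · intro x hx
        by_cases hxn : FsNonneg x
        · obtain ⟨σ, hσ, b, hb, hbe⟩ := hback_nonneg x hx hxn
          refine ⟨σ, hσ, b, ?_, hbe⟩
          simp only [Finset.coe_union, Set.mem_union, Finset.mem_coe]
          exact Or.inl (Or.inl hb)
        by_cases hxn' : FsNonneg (-x)
        · obtain ⟨σ, hσ, b, hb, hbe⟩ := hback_nonneg (-x) (graver_neg L hx) hxn'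
          refine ⟨σ, hσ, -b, ?_, by rw [permAct0_neg', ← hbe, neg_neg]⟩
          simp only [Finset.coe_union, Set.mem_union, Finset.mem_coe, Finset.mem_image]
          exact Or.inl (Or.inr ⟨b, hb, rfl⟩)
        · obtain ⟨i, j, hi, hj⟩ := hmixed x hx hxn hxn'
          have hij : i ≠ j := by rintro rfl; omega
          have hxeq := graver_mixed_eq L hL g hg hgL hx hi hj
          obtain ⟨σ, hσ, hσ0, hσ1⟩ := exists_finperm_two' (by norm_num : (0:ℕ) ≠ 1) hij
          refine ⟨σ, hσ, g • (Finsupp.single 0 (1:ℤ) - Finsupp.single 1 1), ?_, ?_⟩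
          · simp only [Finset.coe_union, Set.mem_union, Finset.mem_coe,
              Finset.mem_insert, Finset.mem_singleton]
            exact Or.inr (by simp)
          · rw [permAct0_smul', permAct0_sub', permAct0_single', permAct0_single',
              hσ0, hσ1, hxeq]
    · intro x hx
      simp only [Finset.coe_union, Set.mem_union, Finset.mem_coe, Finset.mem_image]
      rcases hx with hx | hx
      · exact Or.inl (Or.inl hx)
      · exact Or.inl (Or.inr ⟨-x, Set.mem_neg.mp hx, neg_neg x⟩)
    · intro x hx
      simp only [Finset.coe_union, Set.mem_union, Finset.mem_coe, Finset.mem_image,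
        Finset.coe_insert, Set.mem_insert_iff, Finset.coe_singleton,
        Set.mem_singleton_iff, Finset.mem_insert, Finset.mem_singleton] at hx
      rcases hx with (hx | ⟨h, hh, rfl⟩) | (rfl | rfl)
      · exact Or.inl (Or.inl hx)
      · exact Or.inl (Or.inr (by rw [Set.mem_neg, neg_neg]; exact hh))
      · exact Or.inr (Or.inl rfl)
      · exact Or.inr (Or.inr rfl)
end
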